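/- arXiv:2105.11524 — 2 statements merged into one kernel-verified Lean document; each statement's English description precedes it below -/
import Mathlib

section
/- Let z = x + iy ∈ ℂ with x ∈ ℝ. If u, v, r, s ∈ (ℂ^l)^ℤ satisfy H u = z u, H r = z r, H v = x v and H s = x s, then for all integers n > m: W_{[u − v, conj(r) − conj(s)]}(n+1) − W_{[u − v, conj(r) − conj(s)]}(m) = i y ∑_{k=m}^{n} ( 2⟨u_k, r_k⟩ − ⟨u_k, s_k⟩ − ⟨v_k, r_k⟩ ), where ⟨a,b⟩ denotes the Hermitian inner product on ℂ^l. -/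
open MeasureTheory Matrix Filter Topology Finset

noncomputable section

/-- Complexification of a real matrix. -/
def cx {l : ℕ} (A : Matrix (Fin l) (Fin l) ℝ) : Matrix (Fin l) (Fin l) ℂ :=
  A.map (fun a => (a : ℂ))

/-- The (formal) action of the ergodic matrix-valued Jacobi operator `H_ω` on a
two-sided sequence `u : ℤ → ℂ^l`. -/
def jacobiAct {Ω : Type*} {l : ℕ} (D V : Ω → Matrix (Fin l) (Fin l) ℝ)
    (T : Equiv.Perm Ω) (ω : Ω) (u : ℤ → Fin l → ℂ) (n : ℤ) : Fin l → ℂ :=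
  cx (D ((T ^ (n - 1)) ω)) *ᵥ u (n - 1) + cx (D ((T ^ n) ω)) *ᵥ u (n + 1)
    + cx (V ((T ^ n) ω)) *ᵥ u n

/-- The Wronskian `W_{[u,v]}(n) = u_nᵗ D_{n-1} v_{n-1} − v_nᵗ D_{n-1} u_{n-1}`,
where `D_n = D(T^n ω)`. -/
def wronskian {Ω : Type*} {l : ℕ} (D : Ω → Matrix (Fin l) (Fin l) ℝ)
    (T : Equiv.Perm Ω) (ω : Ω) (u v : ℤ → Fin l → ℂ) (n : ℤ) : ℂ :=
  u n ⬝ᵥ (cx (D ((T ^ (n - 1)) ω)) *ᵥ v (n - 1))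
    - v n ⬝ᵥ (cx (D ((T ^ (n - 1)) ω)) *ᵥ u (n - 1))

/-- The Hermitian inner product `⟨a,b⟩ = ∑ i, a i * conj (b i)` on `ℂ^l`. -/
def hinner {l : ℕ} (a b : Fin l → ℂ) : ℂ := ∑ i, a i * starRingEnd ℂ (b i)

/-!
Since `D` and `V` are symmetric, the Wronskian satisfies the discrete Green identity
`W_{[a,b]}(k+1) - W_{[a,b]}(k) = b_k ⬝ (H a)_k - a_k ⬝ (H b)_k` for the bilinear dot product, so
`W(n+1) - W(m)` telescopes into a sum of these terms. As `H` has real coefficients, `conj r` and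
`conj s` are eigensequences for `conj z` and `x`; inserting the four eigenvalue equations, the terms
in `⟨u, r⟩`, `⟨u, s⟩`, `⟨v, r⟩` come with `z - conj z = 2iy`, `z - x = iy`, `x - conj z = -iy`,
and those in `⟨v, s⟩` cancel.
-/

theorem Int.sum_Icc_sub {G : Type*} [AddCommGroup G] (f : ℤ → G) {m n : ℤ}
    (h : m ≤ n + 1) : ∑ k ∈ Icc m n, (f (k + 1) - f k) = f (n + 1) - f m := by
  induction n, (show m - 1 ≤ n by omega) using Int.leInduction with
  | base => simp
  | succ n hn ih =>
    rw [← insert_Icc_right_eq_Icc_add_one (by omega), sum_insert (by simp), ih (by omega)]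
    abel

lemma hinner_eq_dotProduct_star {l : ℕ} (a b : Fin l → ℂ) : hinner a b = a ⬝ᵥ star b := rfl

lemma cx_mulVec_star {l : ℕ} (A : Matrix (Fin l) (Fin l) ℝ) (w : Fin l → ℂ) :
    cx A *ᵥ star w = star (cx A *ᵥ w) := by
  ext i
  simp [cx, mulVec, dotProduct]

lemma dotProduct_cx_mulVec_comm {l : ℕ} {A : Matrix (Fin l) (Fin l) ℝ} (hA : A.IsSymm)
    (v w : Fin l → ℂ) : v ⬝ᵥ (cx A *ᵥ w) = w ⬝ᵥ (cx A *ᵥ v) := by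
  rw [dotProduct_mulVec, ← mulVec_transpose, cx, ← transpose_map, hA.eq, dotProduct_comm]

section
variable {Ω : Type*} {l : ℕ} (D V : Ω → Matrix (Fin l) (Fin l) ℝ) (T : Equiv.Perm Ω) (ω : Ω)

lemma jacobiAct_sub (u v : ℤ → Fin l → ℂ) (n : ℤ) :
    jacobiAct D V T ω (u - v) n = jacobiAct D V T ω u n - jacobiAct D V T ω v n := by
  simp only [jacobiAct, Pi.sub_apply, mulVec_sub]
  abel

lemma jacobiAct_star (u : ℤ → Fin l → ℂ) (n : ℤ) :
    jacobiAct D V T ω (star u) n = star (jacobiAct D V T ω u n) := by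
  simp only [jacobiAct, Pi.star_apply, cx_mulVec_star, star_add]

variable {D V}

theorem wronskian_add_one_sub (hD : ∀ ω, (D ω).IsSymm) (hV : ∀ ω, (V ω).IsSymm)
    (a b : ℤ → Fin l → ℂ) (k : ℤ) :
    wronskian D T ω a b (k + 1) - wronskian D T ω a b k
      = b k ⬝ᵥ jacobiAct D V T ω a k - a k ⬝ᵥ jacobiAct D V T ω b k := by
  simp only [wronskian, jacobiAct, add_sub_cancel_right, dotProduct_add,
    dotProduct_cx_mulVec_comm (hD _) (a (k + 1)), dotProduct_cx_mulVec_comm (hD _) (b (k + 1)),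
    dotProduct_cx_mulVec_comm (hV _) (b k)]
  ring

theorem wronskian_sub_eq_sum (hD : ∀ ω, (D ω).IsSymm) (hV : ∀ ω, (V ω).IsSymm)
    (a b : ℤ → Fin l → ℂ) {m n : ℤ} (hmn : m ≤ n + 1) :
    wronskian D T ω a b (n + 1) - wronskian D T ω a b m
      = ∑ k ∈ Icc m n, (b k ⬝ᵥ jacobiAct D V T ω a k - a k ⬝ᵥ jacobiAct D V T ω b k) := by
  rw [← Int.sum_Icc_sub _ hmn]
  exact sum_congr rfl fun k _ => wronskian_add_one_sub T ω hD hV a b k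

end

theorem wronskian_im_formula_general
    {Ω : Type*}
    (T : Equiv.Perm Ω)
    {l : ℕ} (D V : Ω → Matrix (Fin l) (Fin l) ℝ)
    (hDsymm : ∀ ω, (D ω).IsSymm)
    (hVsymm : ∀ ω, (V ω).IsSymm)
    (ω : Ω) (x y : ℝ) (z : ℂ) (hz : z = (x : ℂ) + Complex.I * (y : ℂ))
    (u v r s : ℤ → Fin l → ℂ)
    (hu : ∀ n : ℤ, jacobiAct D V T ω u n = z • u n)
    (hr : ∀ n : ℤ, jacobiAct D V T ω r n = z • r n)
    (hv : ∀ n : ℤ, jacobiAct D V T ω v n = (x : ℂ) • v n)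
    (hs : ∀ n : ℤ, jacobiAct D V T ω s n = (x : ℂ) • s n)
    (m n : ℤ) (hmn : m < n) :
    wronskian D T ω (fun k => u k - v k)
        (fun k i => starRingEnd ℂ (r k i) - starRingEnd ℂ (s k i)) (n + 1)
      - wronskian D T ω (fun k => u k - v k)
        (fun k i => starRingEnd ℂ (r k i) - starRingEnd ℂ (s k i)) m
    = Complex.I * (y : ℂ) * ∑ k ∈ Finset.Icc m n,
        (2 * hinner (u k) (r k) - hinner (u k) (s k) - hinner (v k) (r k)) := by
  change wronskian D T ω (u - v) (star r - star s) (n + 1)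
      - wronskian D T ω (u - v) (star r - star s) m = _
  rw [wronskian_sub_eq_sum T ω hDsymm hVsymm _ _ (by omega), mul_sum]
  refine sum_congr rfl fun k _ => ?_
  have hconj : starRingEnd ℂ z = (x : ℂ) - Complex.I * (y : ℂ) := by
    simp [hz, sub_eq_add_neg]
  simp only [jacobiAct_sub, jacobiAct_star, hu, hv, hr, hs, Pi.sub_apply, Pi.star_apply, star_smul,
    Complex.star_def, Complex.conj_ofReal, hinner_eq_dotProduct_star, dotProduct_sub,
    sub_dotProduct, dotProduct_smul, smul_eq_mul, hconj]
  rw [dotProduct_comm (star (r k)) (u k), dotProduct_comm (star (s k)) (u k),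
    dotProduct_comm (star (r k)) (v k), dotProduct_comm (star (s k)) (v k), hz]
  ring

/-- If `H u = z u`, `H r = z r`, `H v = x v`, `H s = x s` with `z = x + iy`, then
`W_{[u − v, conj r − conj s]}(n+1) − W_{[u − v, conj r − conj s]}(m)
  = i y ∑_{k=m}^{n} (2⟨u_k, r_k⟩ − ⟨u_k, s_k⟩ − ⟨v_k, r_k⟩)`. -/
theorem wronskian_im_formula
    {Ω : Type*} [MeasurableSpace Ω] (ν : Measure Ω) [IsProbabilityMeasure ν]
    (T : Equiv.Perm Ω) (hT : Ergodic (⇑T) ν)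
    {l : ℕ} (D V : Ω → Matrix (Fin l) (Fin l) ℝ)
    (hDsymm : ∀ ω, (D ω).IsSymm) (hDinv : ∀ ω, IsUnit (D ω))
    (hDbdd : ∃ C : ℝ, ∀ ω i j, |D ω i j| ≤ C)
    (hVsymm : ∀ ω, (V ω).IsSymm)
    (ω : Ω) (x y : ℝ) (z : ℂ) (hz : z = (x : ℂ) + Complex.I * (y : ℂ))
    (u v r s : ℤ → Fin l → ℂ)
    (hu : ∀ n : ℤ, jacobiAct D V T ω u n = z • u n)
    (hr : ∀ n : ℤ, jacobiAct D V T ω r n = z • r n)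
    (hv : ∀ n : ℤ, jacobiAct D V T ω v n = (x : ℂ) • v n)
    (hs : ∀ n : ℤ, jacobiAct D V T ω s n = (x : ℂ) • s n)
    (m n : ℤ) (hmn : m < n) :
    wronskian D T ω (fun k => u k - v k)
        (fun k i => starRingEnd ℂ (r k i) - starRingEnd ℂ (s k i)) (n + 1)
      - wronskian D T ω (fun k => u k - v k)
        (fun k i => starRingEnd ℂ (r k i) - starRingEnd ℂ (s k i)) m
    = Complex.I * (y : ℂ) * ∑ k ∈ Finset.Icc m n,
        (2 * hinner (u k) (r k) - hinner (u k) (s k) - hinner (v k) (r k)) :=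
  wronskian_im_formula_general T D V hDsymm hVsymm ω x y z hz u v r s hu hr hv hs m n hmn
end
end

section
/- Let z ∈ ℂ_+, ω ∈ Ω, let (F_n(z,ω))_{n≥0} be the Jost solutions and M^φ(z,ω) the Weyl–Titchmarsh function, and set D_m := D(T^m ω), V_n := V(T^n ω). Then for all m, n ∈ ℤ_+: (a) F_n(z, T^m ω) · F_m(z, ω) = F_{n+m}(z, ω); (b) M^φ(z, T^m ω) = −F_{m+1}(z, ω) · F_m(z, ω)^{−1} · D_m^{−1}; (c) −(M^φ(z, T^{n−1} ω))^{−1} − D_n · M^φ(z, T^n ω) · D_n + V_n = z·I. -/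
open MeasureTheory Matrix Filter Topology Finset

noncomputable section

/-- `F` is a matrix solution of the eigenvalue equation
`D_{n-1} F_{n-1} + D_n F_{n+1} + V_n F_n = z F_n` (on `ℤ_+`, for `n ≥ 1`). -/
def IsMatSol {l : ℕ} (Ds Vs : ℕ → Matrix (Fin l) (Fin l) ℂ) (z : ℂ)
    (F : ℕ → Matrix (Fin l) (Fin l) ℂ) : Prop :=
  ∀ n : ℕ, 1 ≤ n → Ds (n - 1) * F (n - 1) + Ds n * F (n + 1) + Vs n * F n = z • F n

/-- `F` is the Jost solution at `+∞`. -/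
def IsJost {l : ℕ} (Ds Vs : ℕ → Matrix (Fin l) (Fin l) ℂ) (z : ℂ)
    (F : ℕ → Matrix (Fin l) (Fin l) ℂ) : Prop :=
  IsMatSol Ds Vs z F ∧ F 0 = 1 ∧
    Summable (fun n : ℕ => ∑ i, ∑ j, ‖F n i j‖ ^ 2)

/-!
The Jost solution is unique. If `W` solves the eigenvalue equation with `W 0 = 0` and
`∑ ‖W n‖² < ∞`, Green's identity gives `Im z * ∑_{k ≤ N} ‖W k‖² = Im tr (W_Nᴴ D_N W_{N+1})`,
and the right-hand side tends to `0` because `D` is bounded; hence `W = 0`.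
Now `n ↦ F_{n+m}(ω) F_m(ω)⁻¹` is a square-summable solution for the coefficients along the
orbit of `T^m ω` and equals `I` at `0`, so it is `F(T^m ω)`: this is (a), and (b) is (a) at
`n = 1`.
Finally (c) is the eigenvalue equation at `n` multiplied on the right by `F_n⁻¹`.
-/

open scoped Matrix.Norms.Frobenius

namespace Matrix

variable {m n α : Type*} [Fintype m] [Fintype n]

section SeminormedAddCommGroup

variable [SeminormedAddCommGroup α]

theorem frobenius_norm_sq_eq_sum (A : Matrix m n α) :
    ‖A‖ ^ 2 = ∑ i, ∑ j, ‖A i j‖ ^ 2 := by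
  change ‖WithLp.toLp 2 fun i => WithLp.toLp 2 fun j => A i j‖ ^ 2 = _
  simp [PiLp.norm_sq_eq_of_L2]

theorem norm_apply_le_frobenius_norm (A : Matrix m n α) (i : m) (j : n) : ‖A i j‖ ≤ ‖A‖ := by
  refine le_of_sq_le_sq ?_ (norm_nonneg A)
  rw [frobenius_norm_sq_eq_sum]
  calc ‖A i j‖ ^ 2 ≤ ∑ j', ‖A i j'‖ ^ 2 :=
        Finset.single_le_sum (f := fun j' => ‖A i j'‖ ^ 2) (fun _ _ => by positivity)
          (Finset.mem_univ j)
    _ ≤ ∑ i', ∑ j', ‖A i' j'‖ ^ 2 :=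
        Finset.single_le_sum (f := fun i' => ∑ j', ‖A i' j'‖ ^ 2) (fun _ _ => by positivity)
          (Finset.mem_univ i)

theorem frobenius_norm_le_sum_norm (A : Matrix m n α) :
    ‖A‖ ≤ ∑ i, ∑ j, ‖A i j‖ := by
  refine le_of_sq_le_sq ?_ (by positivity)
  rw [frobenius_norm_sq_eq_sum]
  calc ∑ i, ∑ j, ‖A i j‖ ^ 2 ≤ ∑ i, (∑ j, ‖A i j‖) ^ 2 :=
        Finset.sum_le_sum fun i _ => Finset.sum_sq_le_sq_sum_of_nonneg fun j _ => norm_nonneg _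
    _ ≤ (∑ i, ∑ j, ‖A i j‖) ^ 2 := Finset.sum_sq_le_sq_sum_of_nonneg fun i _ => by positivity

theorem norm_trace_le_card_mul_frobenius_norm (A : Matrix n n α) :
    ‖A.trace‖ ≤ Fintype.card n * ‖A‖ :=
  calc ‖A.trace‖ ≤ ∑ i, ‖A i i‖ := norm_sum_le _ _
    _ ≤ ∑ _i : n, ‖A‖ := Finset.sum_le_sum fun i _ => norm_apply_le_frobenius_norm A i i
    _ = Fintype.card n * ‖A‖ := by simp

end SeminormedAddCommGroup

theorem trace_conjTranspose_mul_self (A : Matrix m n ℂ) :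
    (Aᴴ * A).trace = (‖A‖ ^ 2 : ℝ) := by
  simp only [trace, diag, mul_apply, conjTranspose_apply, Complex.star_def, Complex.conj_mul',
    frobenius_norm_sq_eq_sum, Complex.ofReal_sum, Complex.ofReal_pow]
  exact Finset.sum_comm

theorem trace_conjTranspose_mul_mul_of_isHermitian [NonUnitalSemiring α] [StarRing α]
    {A : Matrix m m α} (hA : A.IsHermitian) (X Y : Matrix m n α) :
    (Yᴴ * (A * X)).trace = star (Xᴴ * (A * Y)).trace := by
  rw [← trace_conjTranspose, conjTranspose_mul, conjTranspose_mul, conjTranspose_conjTranspose,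
    hA.eq, Matrix.mul_assoc]

theorem im_trace_conjTranspose_mul_mul_self {A : Matrix m m ℂ} (hA : A.IsHermitian)
    (X : Matrix m n ℂ) : (Xᴴ * (A * X)).trace.im = 0 :=
  Complex.conj_eq_iff_im.mp (trace_conjTranspose_mul_mul_of_isHermitian hA X X).symm

theorem norm_trace_conjTranspose_mul_mul_le (X A Y : Matrix n n ℂ) :
    ‖(Xᴴ * (A * Y)).trace‖ ≤ Fintype.card n * ‖A‖ * (‖X‖ ^ 2 + ‖Y‖ ^ 2) := by
  have hXY : 2 * (‖X‖ * ‖Y‖) ≤ ‖X‖ ^ 2 + ‖Y‖ ^ 2 := by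
    rw [← mul_assoc]; exact two_mul_le_add_sq _ _
  calc ‖(Xᴴ * (A * Y)).trace‖ ≤ Fintype.card n * ‖Xᴴ * (A * Y)‖ :=
        norm_trace_le_card_mul_frobenius_norm _
    _ ≤ Fintype.card n * (‖A‖ * (‖X‖ * ‖Y‖)) := by
        gcongr
        calc ‖Xᴴ * (A * Y)‖ ≤ ‖Xᴴ‖ * (‖A‖ * ‖Y‖) :=
              (frobenius_norm_mul _ _).trans (by gcongr; exact frobenius_norm_mul _ _)
          _ = ‖A‖ * (‖X‖ * ‖Y‖) := by rw [frobenius_norm_conjTranspose]; ring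
    _ ≤ Fintype.card n * ‖A‖ * (‖X‖ ^ 2 + ‖Y‖ ^ 2) := by
        rw [← mul_assoc]; gcongr; linarith [mul_nonneg (norm_nonneg X) (norm_nonneg Y)]

end Matrix

theorem isHermitian_cx {l : ℕ} {A : Matrix (Fin l) (Fin l) ℝ} (hA : A.IsSymm) :
    (cx A).IsHermitian := by
  ext i j
  simp [cx, hA.apply]

theorem isUnit_cx {l : ℕ} {A : Matrix (Fin l) (Fin l) ℝ} (hA : IsUnit A) : IsUnit (cx A) :=
  hA.map Complex.ofRealHom.mapMatrix

theorem norm_cx {l : ℕ} (A : Matrix (Fin l) (Fin l) ℝ) : ‖cx A‖ = ‖A‖ :=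
  Matrix.frobenius_norm_map_eq _ _ Complex.norm_real

namespace IsMatSol

variable {l : ℕ} {Ds Vs : ℕ → Matrix (Fin l) (Fin l) ℂ} {z : ℂ}
  {F G : ℕ → Matrix (Fin l) (Fin l) ℂ}

theorem sub (hF : IsMatSol Ds Vs z F) (hG : IsMatSol Ds Vs z G) : IsMatSol Ds Vs z (F - G) := by
  intro n hn
  simp only [Pi.sub_apply, Matrix.mul_sub, smul_sub, ← hF n hn, ← hG n hn]
  abel

theorem mul_const (hF : IsMatSol Ds Vs z F) (C : Matrix (Fin l) (Fin l) ℂ) :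
    IsMatSol Ds Vs z (fun n => F n * C) := by
  intro n hn
  simp only [← Matrix.mul_assoc, ← Matrix.add_mul, hF n hn, smul_mul_assoc]

theorem comp_add (hF : IsMatSol Ds Vs z F) (m : ℕ) :
    IsMatSol (fun n => Ds (n + m)) (fun n => Vs (n + m)) z (fun n => F (n + m)) := by
  intro n hn
  have h := hF (n + m) (by omega)
  rwa [show n + m - 1 = n - 1 + m by omega, show n + m + 1 = n + 1 + m by omega] at h

theorem im_trace_succ_eq (hF : IsMatSol Ds Vs z F) (hD : ∀ n, (Ds n).IsHermitian)
    (hV : ∀ n, (Vs n).IsHermitian) (n : ℕ) :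
    ((F (n + 1))ᴴ * (Ds (n + 1) * F (n + 2))).trace.im
      = ((F n)ᴴ * (Ds n * F (n + 1))).trace.im + z.im * ‖F (n + 1)‖ ^ 2 := by
  have h := congrArg (fun X => ((F (n + 1))ᴴ * X).trace.im) (hF (n + 1) le_add_self)
  simp only [Nat.add_sub_cancel, Matrix.mul_add, Matrix.trace_add, Complex.add_im] at h
  rw [Matrix.trace_conjTranspose_mul_mul_of_isHermitian (hD n),
    Matrix.im_trace_conjTranspose_mul_mul_self (hV (n + 1)), Matrix.mul_smul,
    Matrix.trace_smul, smul_eq_mul, Matrix.trace_conjTranspose_mul_self,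
    Complex.star_def, Complex.conj_im, Complex.im_mul_ofReal] at h
  linarith

theorem im_trace_eq_mul_sum_norm_sq (hF : IsMatSol Ds Vs z F) (hD : ∀ n, (Ds n).IsHermitian)
    (hV : ∀ n, (Vs n).IsHermitian) (hF0 : F 0 = 0) (N : ℕ) :
    ((F N)ᴴ * (Ds N * F (N + 1))).trace.im = z.im * ∑ k ∈ Finset.range (N + 1), ‖F k‖ ^ 2 := by
  induction N with
  | zero => simp [hF0]
  | succ N ih => rw [hF.im_trace_succ_eq hD hV, ih, Finset.sum_range_succ _ (N + 1)]; ring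

theorem eq_zero_of_summable (hF : IsMatSol Ds Vs z F) (hD : ∀ n, (Ds n).IsHermitian)
    (hV : ∀ n, (Vs n).IsHermitian) (hDb : ∃ C, ∀ n, ‖Ds n‖ ≤ C) (hz : z.im ≠ 0)
    (hF0 : F 0 = 0) (hsum : Summable fun n => ‖F n‖ ^ 2) : F = 0 := by
  obtain ⟨C, hC⟩ := hDb
  set s : ℕ → ℝ := fun n => ‖F n‖ ^ 2
  have hs : Tendsto s atTop (𝓝 0) := hsum.tendsto_atTop_zero
  have hbound : ∀ N, ‖((F N)ᴴ * (Ds N * F (N + 1))).trace‖ ≤ l * C * (s N + s (N + 1)) := by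
    intro N
    refine (Matrix.norm_trace_conjTranspose_mul_mul_le _ _ _).trans ?_
    simp only [Fintype.card_fin]
    gcongr
    exact hC N
  have hpartial : Tendsto (fun N => ∑ k ∈ Finset.range (N + 1), s k) atTop (𝓝 0) := by
    have hb : Tendsto (fun N => ((F N)ᴴ * (Ds N * F (N + 1))).trace) atTop (𝓝 0) :=
      squeeze_zero_norm hbound <| by
        simpa using (hs.add (hs.comp (tendsto_add_atTop_nat 1))).const_mul (l * C)
    simpa only [Function.comp_def, hF.im_trace_eq_mul_sum_norm_sq hD hV hF0, Complex.zero_im,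
      zero_div, mul_div_cancel_left₀ _ hz]
      using ((Complex.continuous_im.tendsto 0).comp hb).div_const z.im
  funext n
  have hsn : s n ≤ 0 := by
    refine ge_of_tendsto hpartial (eventually_ge_atTop n |>.mono fun N hN => ?_)
    exact Finset.single_le_sum (f := s) (fun k _ => by positivity) (Finset.mem_range.2 (by omega))
  simpa [s] using le_antisymm hsn (by positivity)

theorem riccati (hF : IsMatSol Ds Vs z F) (hFu : ∀ n, IsUnit (F n)) (hDu : ∀ n, IsUnit (Ds n))
    {n : ℕ} (hn : 1 ≤ n) :
    -(-(F n * (F (n - 1))⁻¹ * (Ds (n - 1))⁻¹))⁻¹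
      - Ds n * -(F (n + 1) * (F n)⁻¹ * (Ds n)⁻¹) * Ds n + Vs n = z • 1 := by
  have hFd n : IsUnit (F n).det := (Matrix.isUnit_iff_isUnit_det _).mp (hFu n)
  have hDd n : IsUnit (Ds n).det := (Matrix.isUnit_iff_isUnit_det _).mp (hDu n)
  have hinv : (-(F n * (F (n - 1))⁻¹ * (Ds (n - 1))⁻¹))⁻¹
      = -(Ds (n - 1) * F (n - 1) * (F n)⁻¹) := by
    refine Matrix.inv_eq_right_inv ?_
    simp only [neg_mul_neg, Matrix.mul_assoc, Matrix.nonsing_inv_mul_cancel_left _ _ (hDd _),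
      Matrix.nonsing_inv_mul_cancel_left _ _ (hFd _), Matrix.mul_nonsing_inv _ (hFd _)]
  have hconj : Ds n * -(F (n + 1) * (F n)⁻¹ * (Ds n)⁻¹) * Ds n
      = -(Ds n * F (n + 1) * (F n)⁻¹) := by
    rw [Matrix.mul_neg, Matrix.neg_mul, Matrix.mul_assoc,
      Matrix.nonsing_inv_mul_cancel_right _ _ (hDd _), Matrix.mul_assoc]
  calc _ = (Ds (n - 1) * F (n - 1) + Ds n * F (n + 1) + Vs n * F n) * (F n)⁻¹ := by
        rw [hinv, hconj, neg_neg, sub_neg_eq_add, Matrix.add_mul, Matrix.add_mul,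
          Matrix.mul_nonsing_inv_cancel_right _ _ (hFd _)]
    _ = z • 1 := by rw [hF n hn, smul_mul_assoc, Matrix.mul_nonsing_inv _ (hFd _)]

end IsMatSol

namespace IsJost

variable {l : ℕ} {Ds Vs : ℕ → Matrix (Fin l) (Fin l) ℂ} {z : ℂ}
  {F G : ℕ → Matrix (Fin l) (Fin l) ℂ}

theorem summable_norm_sq (hF : IsJost Ds Vs z F) : Summable fun n => ‖F n‖ ^ 2 := by
  simpa only [Matrix.frobenius_norm_sq_eq_sum] using hF.2.2

theorem of_summable_norm_sq (hsol : IsMatSol Ds Vs z F) (h0 : F 0 = 1)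
    (hsum : Summable fun n => ‖F n‖ ^ 2) : IsJost Ds Vs z F :=
  ⟨hsol, h0, by simpa only [Matrix.frobenius_norm_sq_eq_sum] using hsum⟩

theorem unique (hD : ∀ n, (Ds n).IsHermitian) (hV : ∀ n, (Vs n).IsHermitian)
    (hDb : ∃ C, ∀ n, ‖Ds n‖ ≤ C) (hz : z.im ≠ 0) (hF : IsJost Ds Vs z F)
    (hG : IsJost Ds Vs z G) : F = G := by
  refine sub_eq_zero.mp (hF.1.sub hG.1 |>.eq_zero_of_summable hD hV hDb hz
    (by simp [hF.2.1, hG.2.1]) ?_)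
  refine .of_nonneg_of_le (fun n => by positivity) (fun n => ?_)
    ((hF.summable_norm_sq.add hG.summable_norm_sq).mul_left 2)
  calc ‖(F - G) n‖ ^ 2 ≤ (‖F n‖ + ‖G n‖) ^ 2 := by gcongr; exact norm_sub_le _ _
    _ ≤ 2 * (‖F n‖ ^ 2 + ‖G n‖ ^ 2) := add_sq_le

theorem shift_mul_inv (hF : IsJost Ds Vs z F) (m : ℕ) (hm : IsUnit (F m)) :
    IsJost (fun n => Ds (n + m)) (fun n => Vs (n + m)) z (fun n => F (n + m) * (F m)⁻¹) := by
  refine of_summable_norm_sq ((hF.1.comp_add m).mul_const _) ?_ ?_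
  · simpa using Matrix.mul_nonsing_inv _ ((Matrix.isUnit_iff_isUnit_det _).mp hm)
  · refine .of_nonneg_of_le (fun n => by positivity) (fun n => ?_)
      (((summable_nat_add_iff m).mpr hF.summable_norm_sq).mul_right (‖(F m)⁻¹‖ ^ 2))
    rw [← mul_pow]
    gcongr
    exact Matrix.frobenius_norm_mul _ _

end IsJost

theorem jost_shift_relations_general
    {Ω : Type*} (T : Equiv.Perm Ω)
    {l : ℕ} (D V : Ω → Matrix (Fin l) (Fin l) ℝ)
    (hDsymm : ∀ ω, (D ω).IsSymm) (hDinv : ∀ ω, IsUnit (D ω))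
    (hDbdd : ∃ C : ℝ, ∀ ω i j, |D ω i j| ≤ C)
    (hVsymm : ∀ ω, (V ω).IsSymm)
    (z : ℂ) (hz : 0 < z.im)
    (F : Ω → ℕ → Matrix (Fin l) (Fin l) ℂ)
    (hF : ∀ ω : Ω,
      IsJost (fun n => cx (D ((T ^ n) ω))) (fun n => cx (V ((T ^ n) ω))) z (F ω))
    (hFinv : ∀ (ω : Ω) (n : ℕ), IsUnit (F ω n))
    (M : Ω → Matrix (Fin l) (Fin l) ℂ)
    (hM : ∀ ω : Ω, M ω = -(F ω 1 * (cx (D ω))⁻¹))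
    (ω : Ω) :
    (∀ n m : ℕ, F ((T ^ m) ω) n * F ω m = F ω (n + m))
    ∧ (∀ m : ℕ, M ((T ^ m) ω) = -(F ω (m + 1) * (F ω m)⁻¹ * (cx (D ((T ^ m) ω)))⁻¹))
    ∧ (∀ n : ℕ, 1 ≤ n →
        -(M ((T ^ (n - 1)) ω))⁻¹
          - cx (D ((T ^ n) ω)) * M ((T ^ n) ω) * cx (D ((T ^ n) ω))
          + cx (V ((T ^ n) ω))
        = z • (1 : Matrix (Fin l) (Fin l) ℂ)) := by
  obtain ⟨C, hC⟩ := hDbdd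
  have hDb : ∃ C, ∀ σ, ‖cx (D σ)‖ ≤ C := ⟨l * l * C, fun σ => by
    rw [norm_cx]
    calc ‖D σ‖ ≤ ∑ i, ∑ j, ‖D σ i j‖ := Matrix.frobenius_norm_le_sum_norm _
      _ ≤ ∑ _i : Fin l, ∑ _j : Fin l, C :=
          Finset.sum_le_sum fun i _ => Finset.sum_le_sum fun j _ => hC σ i j
      _ = l * l * C := by simp [mul_assoc]⟩
  have hFd σ n : IsUnit (F σ n).det := (Matrix.isUnit_iff_isUnit_det _).mp (hFinv σ n)
  have hshift : ∀ n m : ℕ, F ((T ^ m) ω) n = F ω (n + m) * (F ω m)⁻¹ := by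
    intro n m
    have horbit k : (T ^ k) ((T ^ m) ω) = (T ^ (k + m)) ω := by rw [pow_add]; rfl
    have hjost := hF ((T ^ m) ω)
    simp only [horbit] at hjost
    rw [IsJost.unique (fun _ => isHermitian_cx (hDsymm _)) (fun _ => isHermitian_cx (hVsymm _))
      (hDb.imp fun C h _ => h _) hz.ne' hjost ((hF ω).shift_mul_inv m (hFinv ω m))]
  have hM' : ∀ m, M ((T ^ m) ω) = -(F ω (m + 1) * (F ω m)⁻¹ * (cx (D ((T ^ m) ω)))⁻¹) := by
    intro m
    rw [hM, hshift, add_comm]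
  refine ⟨fun n m => by rw [hshift, Matrix.nonsing_inv_mul_cancel_right _ _ (hFd ω m)], hM', ?_⟩
  intro n hn
  rw [hM', hM', Nat.sub_add_cancel hn]
  exact (hF ω).1.riccati (hFinv ω) (fun _ => isUnit_cx (hDinv _)) hn

/-- Relations between the Jost solutions along the orbit of `T` and the shifted
Weyl–Titchmarsh functions `M^φ(z, T^m ω) = −F_1(z, T^m ω) D(T^m ω)⁻¹`. -/
theorem jost_shift_relations
    {Ω : Type*} [MeasurableSpace Ω] (ν : Measure Ω) [IsProbabilityMeasure ν]
    (T : Equiv.Perm Ω) (hT : Ergodic (⇑T) ν)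
    {l : ℕ} (D V : Ω → Matrix (Fin l) (Fin l) ℝ)
    (hDsymm : ∀ ω, (D ω).IsSymm) (hDinv : ∀ ω, IsUnit (D ω))
    (hDbdd : ∃ C : ℝ, ∀ ω i j, |D ω i j| ≤ C)
    (hVsymm : ∀ ω, (V ω).IsSymm)
    (z : ℂ) (hz : 0 < z.im)
    (F : Ω → ℕ → Matrix (Fin l) (Fin l) ℂ)
    (hF : ∀ ω : Ω,
      IsJost (fun n => cx (D ((T ^ n) ω))) (fun n => cx (V ((T ^ n) ω))) z (F ω))
    (hFinv : ∀ (ω : Ω) (n : ℕ), IsUnit (F ω n))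
    (M : Ω → Matrix (Fin l) (Fin l) ℂ)
    (hM : ∀ ω : Ω, M ω = -(F ω 1 * (cx (D ω))⁻¹))
    (ω : Ω) :
    (∀ n m : ℕ, F ((T ^ m) ω) n * F ω m = F ω (n + m))
    ∧ (∀ m : ℕ, M ((T ^ m) ω) = -(F ω (m + 1) * (F ω m)⁻¹ * (cx (D ((T ^ m) ω)))⁻¹))
    ∧ (∀ n : ℕ, 1 ≤ n →
        -(M ((T ^ (n - 1)) ω))⁻¹
          - cx (D ((T ^ n) ω)) * M ((T ^ n) ω) * cx (D ((T ^ n) ω))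
          + cx (V ((T ^ n) ω))
        = z • (1 : Matrix (Fin l) (Fin l) ℂ)) :=
  jost_shift_relations_general T D V hDsymm hDinv hDbdd hVsymm z hz F hF hFinv M hM ω
end
end
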